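/- Let l_z, l_θ be positive integers, let R_z be a real positive definite l_z×l_z matrix, let P_0 be a real positive definite l_θ×l_θ matrix, let θ_0 ∈ ℝ^{l_θ}, and for each i ≥ 0 let Φ_{f,i} ∈ ℝ^{l_z×l_θ} and z_i, u_{f,i} ∈ ℝ^{l_z}. Define the retrospective cost J_k(θ) = Σ_{i=0}^{k} (z_i + Φ_{f,i} θ − u_{f,i})ᵀ R_z (z_i + Φ_{f,i} θ − u_{f,i}) + (θ − θ_0)ᵀ P_0^{−1} (θ − θ_0). Define sequences (θ_k)_{k≥0} and (P_k)_{k≥0} by: θ at index 0 equals θ_0, P at index 0 equals P_0, and for all k ≥ 0, P_{k+1} = P_k − P_k Φ_{f,k}ᵀ (R_z^{−1} + Φ_{f,k} P_k Φ_{f,k}ᵀ)^{−1} Φ_{f,k} P_k and θ_{k+1} = θ_k − P_{k+1} Φ_{f,k}ᵀ R_z (z_k + Φ_{f,k} θ_k − u_{f,k}). Then for every k ≥ 0, θ_{k+1} is the unique global minimizer of J_k over ℝ^{l_θ}, i.e., for all θ ≠ θ_{k+1}, J_k(θ_{k+1}) < J_k(θ). -/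

import Mathlib

open Matrix Finset

/-- auxiliary: sum of matrices acting on a vector. -/
lemma rcac_sum_mulVec {n m : ℕ} (s : Finset ℕ) (A : ℕ → Matrix (Fin n) (Fin m) ℝ) (v : Fin m → ℝ) :
    (∑ i ∈ s, A i) *ᵥ v = ∑ i ∈ s, (A i) *ᵥ v := by
  ext j
  simp only [Matrix.mulVec, dotProduct, Finset.sum_apply, Matrix.sum_apply, Finset.sum_mul]
  rw [Finset.sum_comm]

/-- auxiliary: dot product with a sum of vectors. -/
lemma rcac_dot_sum {n : ℕ} (s : Finset ℕ) (v : Fin n → ℝ) (w : ℕ → Fin n → ℝ) :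
    v ⬝ᵥ (∑ i ∈ s, w i) = ∑ i ∈ s, v ⬝ᵥ w i := by
  simp only [dotProduct, Finset.sum_apply, Finset.mul_sum]
  rw [Finset.sum_comm]

/-- auxiliary: move a matrix across a dot product. -/
lemma rcac_dot_swap {n m : ℕ} (A : Matrix (Fin n) (Fin m) ℝ) (x : Fin m → ℝ) (y : Fin n → ℝ) :
    (A *ᵥ x) ⬝ᵥ y = x ⬝ᵥ (Aᵀ *ᵥ y) := by
  rw [dotProduct_comm, dotProduct_mulVec, ← Matrix.mulVec_transpose, dotProduct_comm]

/-- auxiliary: symmetric matrices give symmetric bilinear forms. -/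
lemma rcac_dot_symm {n : ℕ} {M : Matrix (Fin n) (Fin n) ℝ} (hM : Mᵀ = M)
    (x y : Fin n → ℝ) : x ⬝ᵥ (M *ᵥ y) = y ⬝ᵥ (M *ᵥ x) := by
  rw [dotProduct_comm, rcac_dot_swap, hM]

/-- auxiliary: expansion of a quadratic form under a symmetric matrix. -/
lemma rcac_quad {n : ℕ} {M : Matrix (Fin n) (Fin n) ℝ} (hM : Mᵀ = M) (a c : Fin n → ℝ) :
    (a + c) ⬝ᵥ (M *ᵥ (a + c)) = a ⬝ᵥ (M *ᵥ a) + 2 * (c ⬝ᵥ (M *ᵥ a)) + c ⬝ᵥ (M *ᵥ c) := by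
  rw [Matrix.mulVec_add, dotProduct_add, add_dotProduct, add_dotProduct,
    rcac_dot_symm hM a c]
  ring

/-- auxiliary: one Woodbury/RLS covariance update step. -/
lemma rcac_woodbury {lz lθ : ℕ}
    (Rz : Matrix (Fin lz) (Fin lz) ℝ) (hRz : Rz.PosDef)
    (S P : Matrix (Fin lθ) (Fin lθ) ℝ) (hP : P.PosDef)
    (Φ : Matrix (Fin lz) (Fin lθ) ℝ)
    (hSP : S * P = 1) :
    (S + Φᵀ * Rz * Φ) * (P - P * Φᵀ * (Rz⁻¹ + Φ * P * Φᵀ)⁻¹ * Φ * P) = 1 := by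
  set M := Rz⁻¹ + Φ * P * Φᵀ with hMdef
  have hMpd : M.PosDef := by
    refine hRz.inv.add_posSemidef ?_
    simpa using hP.posSemidef.mul_mul_conjTranspose_same Φ
  have hMM : M * M⁻¹ = 1 :=
    Matrix.mul_nonsing_inv _ ((Matrix.isUnit_iff_isUnit_det M).1 hMpd.isUnit)
  have hRR : Rz * Rz⁻¹ = 1 :=
    Matrix.mul_nonsing_inv _ ((Matrix.isUnit_iff_isUnit_det Rz).1 hRz.isUnit)
  have hkey : Rz * (Φ * P * Φᵀ) * M⁻¹ = Rz - M⁻¹ := by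
    have h1 : Φ * P * Φᵀ = M - Rz⁻¹ := by rw [hMdef]; abel
    rw [h1, Matrix.mul_sub, Matrix.sub_mul, Matrix.mul_assoc Rz M M⁻¹, hMM, hRR,
      Matrix.mul_one, Matrix.one_mul]
  have hSK : S * (P * Φᵀ * M⁻¹ * Φ * P) = Φᵀ * M⁻¹ * Φ * P := by
    calc S * (P * Φᵀ * M⁻¹ * Φ * P) = (S * P) * (Φᵀ * M⁻¹ * Φ * P) := by
          simp only [Matrix.mul_assoc]
      _ = Φᵀ * M⁻¹ * Φ * P := by rw [hSP, Matrix.one_mul]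
  have hAK : (Φᵀ * Rz * Φ) * (P * Φᵀ * M⁻¹ * Φ * P)
      = Φᵀ * Rz * Φ * P - Φᵀ * M⁻¹ * Φ * P := by
    calc (Φᵀ * Rz * Φ) * (P * Φᵀ * M⁻¹ * Φ * P)
        = Φᵀ * (Rz * (Φ * P * Φᵀ) * M⁻¹) * (Φ * P) := by simp only [Matrix.mul_assoc]
      _ = Φᵀ * (Rz - M⁻¹) * (Φ * P) := by rw [hkey]
      _ = Φᵀ * Rz * Φ * P - Φᵀ * M⁻¹ * Φ * P := by
          rw [Matrix.mul_sub, Matrix.sub_mul]; simp only [Matrix.mul_assoc]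
  calc (S + Φᵀ * Rz * Φ) * (P - P * Φᵀ * M⁻¹ * Φ * P)
      = S * P - S * (P * Φᵀ * M⁻¹ * Φ * P)
        + ((Φᵀ * Rz * Φ) * P - (Φᵀ * Rz * Φ) * (P * Φᵀ * M⁻¹ * Φ * P)) := by
        rw [Matrix.add_mul, Matrix.mul_sub, Matrix.mul_sub]
    _ = 1 := by rw [hSP, hSK, hAK]; abel

/-- Proposition 1 (RCAC/RLS): the recursively computed `θ (k+1)` is the unique
global minimizer of the retrospective cost `J k`. -/
theorem rcac_recursion_minimizes_retrospective_cost
    (lz lθ : ℕ) (hlz : 0 < lz) (hlθ : 0 < lθ)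
    (Rz : Matrix (Fin lz) (Fin lz) ℝ) (hRz : Rz.PosDef)
    (P0 : Matrix (Fin lθ) (Fin lθ) ℝ) (hP0 : P0.PosDef)
    (θ0 : Fin lθ → ℝ)
    (Φ : ℕ → Matrix (Fin lz) (Fin lθ) ℝ)
    (z u : ℕ → Fin lz → ℝ)
    (J : ℕ → (Fin lθ → ℝ) → ℝ)
    (hJ : ∀ k θ, J k θ =
      (∑ i ∈ Finset.range (k + 1),
        (z i + (Φ i) *ᵥ θ - u i) ⬝ᵥ (Rz *ᵥ (z i + (Φ i) *ᵥ θ - u i)))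
      + (θ - θ0) ⬝ᵥ (P0⁻¹ *ᵥ (θ - θ0)))
    (θseq : ℕ → (Fin lθ → ℝ))
    (Pseq : ℕ → Matrix (Fin lθ) (Fin lθ) ℝ)
    (hθ0 : θseq 0 = θ0)
    (hP0' : Pseq 0 = P0)
    (hPrec : ∀ k, Pseq (k + 1) =
      Pseq k - Pseq k * (Φ k)ᵀ * (Rz⁻¹ + Φ k * Pseq k * (Φ k)ᵀ)⁻¹ * Φ k * Pseq k)
    (hθrec : ∀ k, θseq (k + 1) =
      θseq k - (Pseq (k + 1)) *ᵥ ((Φ k)ᵀ *ᵥ (Rz *ᵥ (z k + (Φ k) *ᵥ (θseq k) - u k)))) :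
    ∀ k : ℕ, ∀ θ : Fin lθ → ℝ, θ ≠ θseq (k + 1) →
      J k (θseq (k + 1)) < J k θ := by
  have hRzsym : Rzᵀ = Rz := by simpa [Matrix.IsHermitian] using hRz.isHermitian
  have hP0isym : (P0⁻¹)ᵀ = P0⁻¹ := by simpa [Matrix.IsHermitian] using hP0.inv.isHermitian
  set S : ℕ → Matrix (Fin lθ) (Fin lθ) ℝ :=
    fun n => P0⁻¹ + ∑ i ∈ Finset.range n, (Φ i)ᵀ * Rz * Φ i with hSdef
  have hSpd : ∀ n, (S n).PosDef := by
    intro n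
    refine hP0.inv.add_posSemidef ?_
    exact Finset.sum_induction _ _ (fun a b ha hb => ha.add hb) Matrix.PosSemidef.zero
      (fun i _ => by simpa using hRz.posSemidef.conjTranspose_mul_mul_same (Φ i))
  have hSsucc : ∀ n, S (n + 1) = S n + (Φ n)ᵀ * Rz * Φ n := by
    intro n
    simp only [hSdef, Finset.sum_range_succ, add_assoc]
  -- Pseq n is a right inverse of S n
  have hSP : ∀ n, S n * Pseq n = 1 := by
    intro n
    induction n with
    | zero =>
      have h : S 0 = P0⁻¹ := by simp [hSdef]
      rw [h, hP0']
      exact Matrix.nonsing_inv_mul P0 ((Matrix.isUnit_iff_isUnit_det P0).1 hP0.isUnit)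
    | succ n ih =>
      have hPpd : (Pseq n).PosDef := by
        have h := Matrix.inv_eq_right_inv ih
        rw [← h]; exact (hSpd n).inv
      rw [hSsucc n, hPrec n]
      exact rcac_woodbury Rz hRz (S n) (Pseq n) hPpd (Φ n) ih
  -- the running linear term
  set b : ℕ → (Fin lθ → ℝ) :=
    fun n => P0⁻¹ *ᵥ θ0 + ∑ i ∈ Finset.range n, (Φ i)ᵀ *ᵥ (Rz *ᵥ (u i - z i)) with hbdef
  -- gradient identity: S n *ᵥ θseq n = b n
  have hgrad : ∀ n, (S n) *ᵥ θseq n = b n := by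
    intro n
    induction n with
    | zero => simp [hSdef, hbdef, hθ0]
    | succ n ih =>
      have hginv : (S (n + 1)) *ᵥ ((Pseq (n + 1)) *ᵥ
          ((Φ n)ᵀ *ᵥ (Rz *ᵥ (z n + Φ n *ᵥ θseq n - u n))))
          = (Φ n)ᵀ *ᵥ (Rz *ᵥ (z n + Φ n *ᵥ θseq n - u n)) := by
        rw [Matrix.mulVec_mulVec, hSP (n + 1), Matrix.one_mulVec]
      have hb1 : b (n + 1) = b n + (Φ n)ᵀ *ᵥ (Rz *ᵥ (u n - z n)) := by
        simp only [hbdef, Finset.sum_range_succ, add_assoc]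
      rw [hθrec n, Matrix.mulVec_sub, hginv, hSsucc n, Matrix.add_mulVec, ih, hb1]
      simp only [Matrix.mulVec_add, Matrix.mulVec_sub, Matrix.mulVec_mulVec,
        Matrix.mul_assoc]
      abel
  -- main argument
  intro k θ hne
  set θs := θseq (k + 1) with hθsdef
  set w := θ - θs with hwdef
  have hw : w ≠ 0 := sub_ne_zero.mpr hne
  have hθeq : θ = θs + w := by rw [hwdef]; abel
  -- the gradient at θs vanishes
  have hsplit : ∀ i : ℕ, (Φ i)ᵀ *ᵥ (Rz *ᵥ (z i + Φ i *ᵥ θs - u i))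
      = ((Φ i)ᵀ * Rz * Φ i) *ᵥ θs - (Φ i)ᵀ *ᵥ (Rz *ᵥ (u i - z i)) := by
    intro i
    simp only [Matrix.mulVec_add, Matrix.mulVec_sub, Matrix.mulVec_mulVec, Matrix.mul_assoc]
    abel
  have hG : (∑ i ∈ Finset.range (k + 1), (Φ i)ᵀ *ᵥ (Rz *ᵥ (z i + Φ i *ᵥ θs - u i)))
      + P0⁻¹ *ᵥ (θs - θ0) = 0 := by
    have h1 : (S (k + 1)) *ᵥ θs = b (k + 1) := hgrad (k + 1)
    have h2 : (∑ i ∈ Finset.range (k + 1), (Φ i)ᵀ *ᵥ (Rz *ᵥ (z i + Φ i *ᵥ θs - u i)))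
        + P0⁻¹ *ᵥ (θs - θ0) = (S (k + 1)) *ᵥ θs - b (k + 1) := by
      rw [Finset.sum_congr rfl (fun i _ => hsplit i), Finset.sum_sub_distrib]
      simp only [hSdef, hbdef, Matrix.add_mulVec, rcac_sum_mulVec, Matrix.mulVec_sub,
        Matrix.mul_assoc]
      abel
    rw [h2, h1, sub_self]
  -- quadratic expansion of J
  have hexp : J k θ = J k θs
      + 2 * (w ⬝ᵥ ((∑ i ∈ Finset.range (k + 1),
          (Φ i)ᵀ *ᵥ (Rz *ᵥ (z i + Φ i *ᵥ θs - u i))) + P0⁻¹ *ᵥ (θs - θ0)))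
      + w ⬝ᵥ ((S (k + 1)) *ᵥ w) := by
    rw [hJ k θ, hJ k θs, hθeq]
    have hterm : ∀ i ∈ Finset.range (k + 1),
        (z i + Φ i *ᵥ (θs + w) - u i) ⬝ᵥ (Rz *ᵥ (z i + Φ i *ᵥ (θs + w) - u i))
        = (z i + Φ i *ᵥ θs - u i) ⬝ᵥ (Rz *ᵥ (z i + Φ i *ᵥ θs - u i))
          + 2 * (w ⬝ᵥ ((Φ i)ᵀ *ᵥ (Rz *ᵥ (z i + Φ i *ᵥ θs - u i))))
          + w ⬝ᵥ (((Φ i)ᵀ * Rz * Φ i) *ᵥ w) := by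
      intro i _
      have h3 : z i + Φ i *ᵥ (θs + w) - u i = (z i + Φ i *ᵥ θs - u i) + Φ i *ᵥ w := by
        rw [Matrix.mulVec_add]; abel
      rw [h3, rcac_quad hRzsym, rcac_dot_swap, rcac_dot_swap]
      simp only [Matrix.mulVec_mulVec, Matrix.mul_assoc]
    have hreg : (θs + w - θ0) ⬝ᵥ (P0⁻¹ *ᵥ (θs + w - θ0))
        = (θs - θ0) ⬝ᵥ (P0⁻¹ *ᵥ (θs - θ0))
          + 2 * (w ⬝ᵥ (P0⁻¹ *ᵥ (θs - θ0)))
          + w ⬝ᵥ (P0⁻¹ *ᵥ w) := by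
      have h4 : θs + w - θ0 = (θs - θ0) + w := by abel
      rw [h4, rcac_quad hP0isym]
    rw [Finset.sum_congr rfl hterm, hreg]
    simp only [Finset.sum_add_distrib]
    simp only [hSdef, Matrix.add_mulVec, rcac_sum_mulVec, dotProduct_add, rcac_dot_sum]
    rw [← Finset.mul_sum]
    ring
  have hpos : 0 < w ⬝ᵥ ((S (k + 1)) *ᵥ w) := by
    simpa using (hSpd (k + 1)).dotProduct_mulVec_pos hw
  rw [hexp, hG]
  simp only [dotProduct_zero, mul_zero, add_zero]
  linarith
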